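/- The twisted group algebra k[G,α(·,·|f)^{-1}] structure: for fixed f in a group G and a normalized 3-cocycle α on G, the restriction of the 2-cochain (g,h) ↦ α(g,h|f)^{-1} to the centralizer C_G(f) is a 2-cocycle on C_G(f) with values in k*. -/

import Mathlib

/-!
For `g, h ∈ C_G(f)` every conjugate of `f` occurring in `α(g,h|f)` equals `f`, so on the
centralizer `α(g,h|f) = α(g,h,f)⁻¹ α(g,f,h) α(f,g,h)⁻¹`. The coboundary of this 2-cochain,
evaluated at `(g,h,l)`, is the alternating product of the 3-cocycle identity of `α` at
`(f,g,h,l)`, `(g,f,h,l)`, `(g,h,f,l)` and `(g,h,l,f)`, once `f` is moved past `g`, `h`, `l`.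
-/

/-- `α(g,h|f) = α(g,h,f)⁻¹ · α(g, hfh⁻¹, h) · α((gh)f(gh)⁻¹, g, h)⁻¹`. -/
def aux2 {G : Type*} [Group G] {k : Type*} [Field k]
    (α : G → G → G → kˣ) (g h f : G) : kˣ :=
  (α g h f)⁻¹ * α g (h * f * h⁻¹) h * (α ((g * h) * f * (g * h)⁻¹) g h)⁻¹

def IsThreeCocycle {G A : Type*} [Mul G] [Mul A] (α : G → G → G → A) : Prop :=
  ∀ f g h l : G, α g h l * α f (g * h) l * α f g h = α (f * g) h l * α f g (h * l)

def IsTwoCocycle {H A : Type*} [Mul H] [Mul A] (σ : H → H → A) : Prop :=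
  ∀ g h l : H, σ g h * σ (g * h) l = σ h l * σ g (h * l)

theorem IsTwoCocycle.inv {H A : Type*} [Mul H] [DivisionCommMonoid A] {σ : H → H → A}
    (hσ : IsTwoCocycle σ) : IsTwoCocycle fun g h ↦ (σ g h)⁻¹ := fun g h l ↦ by
  simp only [← mul_inv, hσ g h l]

section Centralizer

variable {G A : Type*} [Group G] [CommGroup A]

def twistOnCentralizer (α : G → G → G → A) (f : G) (g h : Subgroup.centralizer {f}) : A :=
  (α g h f)⁻¹ * α g f h * (α f g h)⁻¹

theorem isTwoCocycle_twistOnCentralizer {α : G → G → G → A} (hα : IsThreeCocycle α)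
    (f : G) : IsTwoCocycle (twistOnCentralizer α f) := by
  rintro ⟨g, hg⟩ ⟨h, hh⟩ ⟨l, hl⟩
  have hgf : g * f = f * g := Subgroup.mem_centralizer_singleton_iff.mp hg
  have hhf : h * f = f * h := Subgroup.mem_centralizer_singleton_iff.mp hh
  have hlf : l * f = f * l := Subgroup.mem_centralizer_singleton_iff.mp hl
  have e₁ := congrArg Additive.ofMul (hα f g h l)
  have e₂ := congrArg Additive.ofMul (hα g f h l)
  have e₃ := congrArg Additive.ofMul (hα g h f l)
  have e₄ := congrArg Additive.ofMul (hα g h l f)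
  rw [← hgf] at e₁
  rw [hhf, ← hlf] at e₃
  apply Additive.ofMul.injective
  simp only [twistOnCentralizer, Subgroup.coe_mul, ofMul_mul, ofMul_inv] at e₁ e₂ e₃ e₄ ⊢
  linear_combination (norm := abel) e₂ - e₁ + e₄ - e₃

end Centralizer

theorem conj_eq_self_of_mem_centralizer {G : Type*} [Group G] {f x : G}
    (hx : x ∈ Subgroup.centralizer {f}) : x * f * x⁻¹ = f := by
  rw [Subgroup.mem_centralizer_singleton_iff.mp hx, mul_inv_cancel_right]

theorem aux2_eq_twistOnCentralizer {G : Type*} [Group G] {k : Type*} [Field k]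
    (α : G → G → G → kˣ) {f : G} (g h : Subgroup.centralizer {f}) :
    aux2 α g h f = twistOnCentralizer α f g h := by
  rw [aux2, twistOnCentralizer, conj_eq_self_of_mem_centralizer h.2, ← Subgroup.coe_mul,
    conj_eq_self_of_mem_centralizer (g * h).2]

theorem stmt4_general {G : Type*} [Group G] {k : Type*} [Field k] (α : G → G → G → kˣ)
    (hcoc : ∀ f g h l : G,
      α g h l * α f (g * h) l * α f g h = α (f * g) h l * α f g (h * l))
    (f : G) (g h l : G)
    (hg : g ∈ Subgroup.centralizer {f}) (hh : h ∈ Subgroup.centralizer {f})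
    (hl : l ∈ Subgroup.centralizer {f}) :
    (aux2 α g h f)⁻¹ * (aux2 α (g * h) l f)⁻¹
      = (aux2 α h l f)⁻¹ * (aux2 α g (h * l) f)⁻¹ := by
  have hσ := (isTwoCocycle_twistOnCentralizer hcoc f).inv ⟨g, hg⟩ ⟨h, hh⟩ ⟨l, hl⟩
  simp only [← aux2_eq_twistOnCentralizer] at hσ
  exact hσ

/-- for a normalized 3-cocycle `α` on `G` valued in `k*` and `f ∈ G`,
the 2-cochain `σ(g,h) = α(g,h|f)⁻¹` restricted to the centralizer `C_G(f)` is a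
2-cocycle: `σ(g,h)σ(gh,l) = σ(h,l)σ(g,hl)`. -/
theorem stmt4 {G : Type*} [Group G] {k : Type*} [Field k] (α : G → G → G → kˣ)
    (hcoc : ∀ f g h l : G,
      α g h l * α f (g * h) l * α f g h = α (f * g) h l * α f g (h * l))
    (hnorm : ∀ f g h : G, f = 1 ∨ g = 1 ∨ h = 1 → α f g h = 1)
    (f : G) (g h l : G)
    (hg : g ∈ Subgroup.centralizer {f}) (hh : h ∈ Subgroup.centralizer {f})
    (hl : l ∈ Subgroup.centralizer {f}) :
    (aux2 α g h f)⁻¹ * (aux2 α (g * h) l f)⁻¹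
      = (aux2 α h l f)⁻¹ * (aux2 α g (h * l) f)⁻¹ :=
  stmt4_general α hcoc f g h l hg hh hl
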